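/- For every deterministic one-counter automaton A over alphabet Σ, there exists a visibly pushdown automaton à over the pushdown alphabet Σ̃ = (Σ × {c}, (Σ × {i}) ∪ {x}, Σ × {r}), where x is a fresh internal letter, such that every word accepted by à has the form ã₁ x ã₂ x … x ãₙ with each ãⱼ ∈ Σ × {c, i, r}, and L(A) = { π₁(ã₁)…π₁(ãₙ) : ã₁ x … x ãₙ ∈ L(Ã) }, where π₁ projects a pair to its first component. -/

import Mathlib

/-- Call / internal / return letter kinds of a pushdown alphabet. -/
inductive Kind : Type
  | c : Kind
  | i : Kind
  | r : Kind
deriving DecidableEq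

/-- Counter actions of a one-counter automaton: increment, decrement (pop on
empty counter leaves it at 0, mirroring the bottom-of-stack convention),
or keep. -/
inductive CAct : Type
  | inc : CAct
  | dec : CAct
  | keep : CAct

/-- A deterministic one-counter automaton (a deterministic pushdown automaton
whose stack alphabet has a single symbol, i.e., a counter). -/
structure DOCA (A : Type) where
  Q : Type
  [fintypeQ : Fintype Q]
  init : Q
  final : Set Q
  step : Q → A → Bool → Option (Q × CAct)

namespace DOCA

variable {A : Type}

def applyAct : CAct → ℕ → ℕ
  | CAct.inc, c => c + 1
  | CAct.dec, c => c - 1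
  | CAct.keep, c => c

def stepConf (M : DOCA A) (p : M.Q × ℕ) (a : A) : Option (M.Q × ℕ) :=
  (M.step p.1 a (decide (p.2 = 0))).map fun q => (q.1, applyAct q.2 p.2)

def evalFrom (M : DOCA A) : Option (M.Q × ℕ) → List A → Option (M.Q × ℕ)
  | c, [] => c
  | some p, a :: w => M.evalFrom (M.stepConf p a) w
  | none, _ :: _ => none

/-- Acceptance of a word: the run from the initial state with counter 0 is
defined and ends in a final state. -/
def accepts (M : DOCA A) (w : List A) : Prop :=
  ∃ p : M.Q × ℕ, M.evalFrom (some (M.init, 0)) w = some p ∧ p.1 ∈ M.final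

end DOCA

/-- A (nondeterministic) visibly pushdown automaton over the alphabet `A`
partitioned by `kind` into call, internal, and return letters. -/
structure VPA (A : Type) (kind : A → Kind) where
  Q : Type
  Γ : Type
  [fintypeQ : Fintype Q]
  [fintypeΓ : Fintype Γ]
  start : Set Q
  final : Set Q
  δc : Q → A → Q → Γ → Prop
  δr : Q → A → Option Γ → Q → Prop
  δi : Q → A → Q → Prop

namespace VPA

variable {A : Type} {kind : A → Kind}

/-- One step of a VPA on configurations (state, stack): a call letter pushes,
an internal letter leaves the stack unchanged, a return letter pops (or reads
the bottom of the empty stack). -/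
def Step (M : VPA A kind) (p : M.Q × List M.Γ) (a : A) (p' : M.Q × List M.Γ) : Prop :=
  match kind a with
  | Kind.c => ∃ γ : M.Γ, M.δc p.1 a p'.1 γ ∧ p'.2 = γ :: p.2
  | Kind.i => M.δi p.1 a p'.1 ∧ p'.2 = p.2
  | Kind.r => (∃ γ σ, p.2 = γ :: σ ∧ M.δr p.1 a (some γ) p'.1 ∧ p'.2 = σ) ∨
      (p.2 = [] ∧ M.δr p.1 a none p'.1 ∧ p'.2 = [])

def Reaches (M : VPA A kind) : M.Q × List M.Γ → List A → M.Q × List M.Γ → Prop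
  | p, [], p' => p = p'
  | p, a :: w, p' => ∃ q, M.Step p a q ∧ M.Reaches q w p'

def accepts (M : VPA A kind) (w : List A) : Prop :=
  ∃ q₀ ∈ M.start, ∃ p : M.Q × List M.Γ, M.Reaches (q₀, []) w p ∧ p.1 ∈ M.final

end VPA

/-- The decorated pushdown alphabet Σ̃ = (Σ × {c}, (Σ × {i}) ∪ {x}, Σ × {r}),
where the fresh separator x is `Sum.inr ()`. -/
abbrev DecAlph (A : Type) : Type := (A × Kind) ⊕ Unit

/-- The partition of the decorated alphabet: (a, c) is a call letter,
(a, i) and the fresh letter x are internal, (a, r) is a return letter. -/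
def decKind {A : Type} : DecAlph A → Kind
  | Sum.inl (_, k) => k
  | Sum.inr _ => Kind.i

/-- Interleave the separator letter x: ã₁ ã₂ … ãₙ ↦ ã₁ x ã₂ x … x ãₙ. -/
def sep {A : Type} : List (A × Kind) → List (DecAlph A)
  | [] => []
  | [a] => [Sum.inl a]
  | a :: b :: rest => Sum.inl a :: Sum.inr () :: sep (b :: rest)

/-! The VPA simulates the DOCA letter by letter: it reads `(a, k)` exactly when the DOCA can take
an `a`-step whose counter action is the push, keep or pop prescribed by `k`, so that its stack
holds the counter in unary, and it reads `x` only between two letters. Call and internal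
transitions cannot inspect the stack, so the zero test is kept in the state instead: every stack
symbol records whether the stack below it is empty, which restores that bit after a pop. -/

section Sep

variable {A : Type}

theorem sep_cons_of_ne_nil (x : A × Kind) {ws : List (A × Kind)} (hws : ws ≠ []) :
    sep (x :: ws) = Sum.inl x :: Sum.inr () :: sep ws := by
  obtain ⟨y, ws, rfl⟩ := List.exists_cons_of_ne_nil hws
  rfl

theorem filterMap_getLeft_sep (ws : List (A × Kind)) : (sep ws).filterMap Sum.getLeft? = ws := by
  induction ws with
  | nil => rfl
  | cons x ws ih =>
    by_cases hws : ws = []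
    · subst hws
      rfl
    · simp [sep_cons_of_ne_nil x hws, List.filterMap_cons, ih]

theorem sep_injective : Function.Injective (sep : List (A × Kind) → List (DecAlph A)) :=
  Function.LeftInverse.injective filterMap_getLeft_sep

end Sep

namespace DOCA

/-- `start` and `afterX` both expect a letter; they differ only in that `afterX` is never
final. -/
inductive Phase : Type
  | start : Phase
  | afterLetter : Phase
  | afterX : Phase
deriving DecidableEq

instance : Fintype Phase :=
  ⟨{Phase.start, Phase.afterLetter, Phase.afterX}, fun p => by cases p <;> simp⟩

def actOf : Kind → CAct
  | Kind.c => CAct.inc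
  | Kind.i => CAct.keep
  | Kind.r => CAct.dec

theorem actOf_surjective : Function.Surjective actOf
  | CAct.inc => ⟨Kind.c, rfl⟩
  | CAct.keep => ⟨Kind.i, rfl⟩
  | CAct.dec => ⟨Kind.r, rfl⟩

def encStack : ℕ → List Bool
  | 0 => []
  | n + 1 => decide (n = 0) :: encStack n

variable {A : Type} (M : DOCA A)

theorem evalFrom_none (u : List A) : M.evalFrom none u = none := by
  cases u <;> rfl

theorem evalFrom_cons_eq_some {c c' : M.Q × ℕ} {a : A} {u : List A} :
    M.evalFrom (some c) (a :: u) = some c' ↔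
      ∃ c₁, M.stepConf c a = some c₁ ∧ M.evalFrom (some c₁) u = some c' := by
  change M.evalFrom (M.stepConf c a) u = some c' ↔ _
  cases M.stepConf c a <;> simp [evalFrom_none]

theorem stepConf_eq_some {c c' : M.Q × ℕ} {a : A} :
    M.stepConf c a = some c' ↔
      ∃ q act, M.step c.1 a (decide (c.2 = 0)) = some (q, act) ∧
        c' = (q, applyAct act c.2) := by
  simp [stepConf, eq_comm]

/-- A state is (DOCA state, whether the counter is zero, phase). -/
def toVPA : VPA (DecAlph A) decKind where
  Q := M.Q × Bool × Phase
  Γ := Bool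
  fintypeQ := letI := M.fintypeQ; inferInstance
  start := {(M.init, true, Phase.start)}
  final := {p | p.1 ∈ M.final ∧ p.2.2 ≠ Phase.afterX}
  δc p b p' γ := match b with
    | Sum.inl (a, _) => p.2.2 ≠ Phase.afterLetter ∧
        M.step p.1 a p.2.1 = some (p'.1, CAct.inc) ∧ p'.2 = (false, Phase.afterLetter) ∧
        γ = p.2.1
    | Sum.inr _ => False
  δr p b oγ p' := match b with
    | Sum.inl (a, _) => p.2.2 ≠ Phase.afterLetter ∧
        M.step p.1 a p.2.1 = some (p'.1, CAct.dec) ∧ p'.2 = (oγ.getD true, Phase.afterLetter)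
    | Sum.inr _ => False
  δi p b p' := match b with
    | Sum.inl (a, _) => p.2.2 ≠ Phase.afterLetter ∧
        M.step p.1 a p.2.1 = some (p'.1, CAct.keep) ∧ p'.2 = (p.2.1, Phase.afterLetter)
    | Sum.inr _ => p.2.2 = Phase.afterLetter ∧ p' = (p.1, p.2.1, Phase.afterX)

def encodeConf (c : M.Q × ℕ) (ph : Phase) : (M.Q × Bool × Phase) × List Bool :=
  ((c.1, decide (c.2 = 0), ph), encStack c.2)

theorem toVPA_step_inl_iff {c : M.Q × ℕ} {ph : Phase} {a : A} {k : Kind}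
    {p' : (M.Q × Bool × Phase) × List Bool} :
    M.toVPA.Step (M.encodeConf c ph) (Sum.inl (a, k)) p' ↔ ph ≠ Phase.afterLetter ∧
      ∃ q, M.step c.1 a (decide (c.2 = 0)) = some (q, actOf k) ∧
        p' = M.encodeConf (q, applyAct (actOf k) c.2) Phase.afterLetter := by
  obtain ⟨q, n⟩ := c
  obtain ⟨⟨q', z, ph'⟩, s⟩ := p'
  cases k <;> cases n <;>
    simp [VPA.Step, toVPA, encodeConf, decKind, encStack, applyAct, actOf, Prod.ext_iff,
      @eq_comm _ (encStack _), @eq_comm _ (decide _), and_comm, and_left_comm, and_assoc]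

theorem toVPA_step_inr_iff {c : M.Q × ℕ} {ph : Phase}
    {p' : (M.Q × Bool × Phase) × List Bool} :
    M.toVPA.Step (M.encodeConf c ph) (Sum.inr ()) p' ↔
      ph = Phase.afterLetter ∧ p' = M.encodeConf c Phase.afterX := by
  simp [VPA.Step, toVPA, encodeConf, decKind, Prod.ext_iff, and_assoc]

theorem toVPA_step_of_stepConf {c c' : M.Q × ℕ} {a : A} {ph : Phase}
    (hph : ph ≠ Phase.afterLetter) (h : M.stepConf c a = some c') :
    ∃ k, M.toVPA.Step (M.encodeConf c ph) (Sum.inl (a, k))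
      (M.encodeConf c' Phase.afterLetter) := by
  obtain ⟨q, act, hstep, rfl⟩ := M.stepConf_eq_some.1 h
  obtain ⟨k, rfl⟩ := actOf_surjective act
  exact ⟨k, M.toVPA_step_inl_iff.2 ⟨hph, q, hstep, rfl⟩⟩

theorem toVPA_reaches_of_evalFrom (a : A) (u : List A) {c c' : M.Q × ℕ} {ph : Phase}
    (hph : ph ≠ Phase.afterLetter) (h : M.evalFrom (some c) (a :: u) = some c') :
    ∃ ws : List (A × Kind), ws.map Prod.fst = a :: u ∧
      M.toVPA.Reaches (M.encodeConf c ph) (sep ws) (M.encodeConf c' Phase.afterLetter) := by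
  induction u generalizing a c ph with
  | nil =>
    obtain ⟨c₁, h₁, hrest⟩ := M.evalFrom_cons_eq_some.1 h
    obtain ⟨k, hS⟩ := M.toVPA_step_of_stepConf hph h₁
    obtain rfl := Option.some.inj hrest
    exact ⟨[(a, k)], rfl, _, hS, rfl⟩
  | cons b u ih =>
    obtain ⟨c₁, h₁, hrest⟩ := M.evalFrom_cons_eq_some.1 h
    obtain ⟨k, hS⟩ := M.toVPA_step_of_stepConf hph h₁
    obtain ⟨ws, hws, hR⟩ := ih b (ph := Phase.afterX) nofun hrest
    have hne : ws ≠ [] := by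
      rintro rfl
      cases hws
    refine ⟨(a, k) :: ws, by rw [List.map_cons, hws], ?_⟩
    rw [sep_cons_of_ne_nil _ hne]
    exact ⟨_, hS, _, M.toVPA_step_inr_iff.2 ⟨rfl, rfl⟩, hR⟩

theorem exists_sep_evalFrom_of_toVPA_reaches :
    ∀ (w : List (DecAlph A)) (c : M.Q × ℕ) (ph : Phase)
    (p' : (M.Q × Bool × Phase) × List Bool), ph ≠ Phase.afterLetter →
    M.toVPA.Reaches (M.encodeConf c ph) w p' → p'.1.2.2 ≠ Phase.afterX →
    ∃ ws, w = sep ws ∧ ∃ n, M.evalFrom (some c) (ws.map Prod.fst) = some (p'.1.1, n)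
  | [], c, _, _, _, h, _ => ⟨[], rfl, c.2, by subst h; rfl⟩
  | Sum.inr () :: _, _, _, _, hph, ⟨_, h, _⟩, _ => absurd (M.toVPA_step_inr_iff.1 h).1 hph
  | Sum.inl (a, k) :: w, c, ph, p', hph, ⟨p₁, h₁, hrest⟩, hfin => by
    obtain ⟨-, q, hstep, rfl⟩ := M.toVPA_step_inl_iff.1 h₁
    have hc : M.stepConf c a = some (q, applyAct (actOf k) c.2) :=
      M.stepConf_eq_some.2 ⟨q, _, hstep, rfl⟩
    match w, hrest with
    | [], hrest =>
      subst hrest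
      exact ⟨[(a, k)], rfl, _, M.evalFrom_cons_eq_some.2 ⟨_, hc, rfl⟩⟩
    | Sum.inl _ :: _, ⟨_, h₂, _⟩ => exact absurd rfl (M.toVPA_step_inl_iff.1 h₂).1
    | Sum.inr () :: w', ⟨p₂, h₂, hrest⟩ =>
      obtain ⟨-, rfl⟩ := M.toVPA_step_inr_iff.1 h₂
      obtain ⟨ws, rfl, n, hn⟩ :=
        exists_sep_evalFrom_of_toVPA_reaches w' _ Phase.afterX p' nofun hrest hfin
      have hws : ws ≠ [] := by
        rintro rfl
        exact hfin (congrArg (·.1.2.2) hrest).symm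
      exact ⟨(a, k) :: ws, (sep_cons_of_ne_nil _ hws).symm, n,
        M.evalFrom_cons_eq_some.2 ⟨_, hc, hn⟩⟩

theorem toVPA_accepts_sep_of_accepts {u : List A} (h : M.accepts u) :
    ∃ ws : List (A × Kind), u = ws.map Prod.fst ∧ M.toVPA.accepts (sep ws) := by
  obtain ⟨p, hp, hfin⟩ := h
  cases u with
  | nil =>
    obtain rfl := Option.some.inj hp
    exact ⟨[], rfl, _, rfl, _, rfl, hfin, nofun⟩
  | cons a u =>
    obtain ⟨ws, hws, hR⟩ := M.toVPA_reaches_of_evalFrom a u (ph := Phase.start) nofun hp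
    exact ⟨ws, hws.symm, _, rfl, _, hR, hfin, nofun⟩

theorem exists_sep_accepts_of_toVPA_accepts {w : List (DecAlph A)} (h : M.toVPA.accepts w) :
    ∃ ws : List (A × Kind), w = sep ws ∧ M.accepts (ws.map Prod.fst) := by
  obtain ⟨_, rfl, p, hR, hfin, hph⟩ := h
  obtain ⟨ws, rfl, n, hn⟩ :=
    M.exists_sep_evalFrom_of_toVPA_reaches w (M.init, 0) Phase.start p nofun hR hph
  exact ⟨ws, rfl, _, hn, hfin⟩

end DOCA

/-- For every deterministic one-counter automaton A over Σ there is a visibly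
pushdown automaton Ã over the decorated pushdown alphabet Σ̃ (with the fresh
internal letter x) such that every word accepted by Ã has the form
ã₁ x ã₂ x … x ãₙ, and L(A) = { π₁(ã₁)…π₁(ãₙ) : ã₁ x … x ãₙ ∈ L(Ã) }. -/
theorem doca_to_vpa (A : Type) (M : DOCA A) :
    ∃ Mt : VPA (DecAlph A) decKind,
      (∀ w : List (DecAlph A), Mt.accepts w → ∃ ws : List (A × Kind), w = sep ws) ∧
      (∀ u : List A, M.accepts u ↔
        ∃ ws : List (A × Kind), u = ws.map Prod.fst ∧ Mt.accepts (sep ws)) := by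
  refine ⟨M.toVPA, fun w hw => ?_, fun u => ⟨M.toVPA_accepts_sep_of_accepts, ?_⟩⟩
  · obtain ⟨ws, hws, -⟩ := M.exists_sep_accepts_of_toVPA_accepts hw
    exact ⟨ws, hws⟩
  · rintro ⟨ws, rfl, hws⟩
    obtain ⟨ws', hsep, hM⟩ := M.exists_sep_accepts_of_toVPA_accepts hws
    rwa [sep_injective hsep]
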